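/- arXiv:2402.19310 — 5 statements merged into one kernel-verified Lean document; each statement's English description precedes it below -/
import Mathlib

section
/- Let X and Y be real Banach spaces and T : X → Y a bounded linear operator. If the cokernel Y / range(T) is a finite-dimensional real vector space, then the range of T is closed in Y. -/
/-- Kato-type closed-range criterion: if the cokernel `Y ⧸ range T` of a bounded
linear operator `T` between real Banach spaces is finite-dimensional, then the
range of `T` is closed in `Y`. -/
theorem kato_closed_range {X Y : Type*}
    [NormedAddCommGroup X] [NormedSpace ℝ X] [CompleteSpace X]
    [NormedAddCommGroup Y] [NormedSpace ℝ Y] [CompleteSpace Y]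
    (T : X →L[ℝ] Y)
    (hcoker : FiniteDimensional ℝ (Y ⧸ LinearMap.range (T : X →ₗ[ℝ] Y))) :
    IsClosed (Set.range T) := by
  set W : Submodule ℝ Y := LinearMap.range (T : X →ₗ[ℝ] Y) with hWdef
  obtain ⟨F, hF⟩ := Submodule.exists_isCompl W
  haveI : FiniteDimensional ℝ F :=
    (W.quotientEquivOfIsCompl F hF).finiteDimensional
  haveI : CompleteSpace F := FiniteDimensional.complete ℝ F
  let S : (X × F) →L[ℝ] Y :=
    T.comp (ContinuousLinearMap.fst ℝ X F) +
      F.subtypeL.comp (ContinuousLinearMap.snd ℝ X F)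
  have hS : ∀ p : X × F, S p = T p.1 + (p.2 : Y) := fun p => rfl
  have hSsurj : Function.Surjective S := by
    intro y
    have hy : y ∈ W ⊔ F := by rw [hF.sup_eq_top]; trivial
    obtain ⟨w, hw, f, hf, rfl⟩ := Submodule.mem_sup.mp hy
    obtain ⟨x, rfl⟩ := hw
    exact ⟨(x, ⟨f, hf⟩), rfl⟩
  have hopen : IsOpenMap S := S.isOpenMap hSsurj
  have hrange : Set.range ⇑T = (W : Set Y) := rfl
  have key : (Set.range ⇑T)ᶜ = S '' {p : X × F | p.2 ≠ 0} := by
    ext y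
    constructor
    · intro hy
      obtain ⟨⟨x, f⟩, rfl⟩ := hSsurj y
      refine ⟨(x, f), ?_, rfl⟩
      intro h0
      have h0' : f = 0 := h0
      apply hy
      rw [hS]
      simp only [h0', Submodule.coe_zero, add_zero]
      exact Set.mem_range_self x
    · rintro ⟨⟨x, f⟩, hf, rfl⟩ ⟨x', hx'⟩
      apply hf
      have hfW : (f : Y) ∈ W := by
        have : (f : Y) = T (x' - x) := by
          rw [map_sub, hx', hS]; abel
        rw [this]
        exact ⟨x' - x, rfl⟩
      have : (f : Y) ∈ W ⊓ F := ⟨hfW, f.2⟩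
      rw [hF.inf_eq_bot] at this
      exact Subtype.ext this
  rw [← isOpen_compl_iff, key]
  exact hopen _ (isOpen_compl_singleton.preimage continuous_snd)
end

section
/- Let λ ≠ 0, δ > 0, ε > 0, and let ψ : [0, ∞) → ℝ be continuously differentiable with f(t) = ψ'(t) + λψ(t). Assume e^{δt}ψ(t) → 0 as t → ∞ and that the functions t ↦ e^{2δt}ψ(t)² and t ↦ e^{2δt}f(t)² are integrable on (0, ∞). Then (λ² − δ² − εδ²) ∫₀^∞ e^{2δt}ψ(t)² dt ≤ (1 + 1/ε) ∫₀^∞ e^{2δt}f(t)² dt + λ ψ(0)². -/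
/-!
Multiply the equation `ψ' + λψ = f` by `2λ e^{2δt} ψ`. Since
`(e^{2δt} ψ²)' = e^{2δt} (2δψ² + 2ψψ')`, completing squares gives the pointwise bound
`λ (e^{2δt} ψ²)' + (λ² − δ² − εδ²) e^{2δt} ψ² ≤ (1 + 1/ε) e^{2δt} f²`.
Integrating over `(0, ∞)`, the total derivative contributes `−λψ(0)²` because
`e^{2δt} ψ(t)² → 0`.
-/

open MeasureTheory Set Filter Topology

theorem AEStronglyMeasurable.of_hasDerivAt {F : Type*} [NormedAddCommGroup F] [NormedSpace ℝ F]
    [CompleteSpace F] {ψ ψ' : ℝ → F} {s : Set ℝ} {μ : Measure ℝ} (hs : MeasurableSet s)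
    (hderiv : ∀ t ∈ s, HasDerivAt ψ (ψ' t) t) : AEStronglyMeasurable ψ' (μ.restrict s) :=
  (aestronglyMeasurable_deriv ψ _).congr <|
    (ae_restrict_iff' hs).2 <| ae_of_all _ fun t ht => (hderiv t ht).deriv

theorem Integrable.weight_mul_mul_of_weight_mul_sq {α : Type*} [MeasurableSpace α]
    {μ : Measure α} {w u v : α → ℝ} (hw : ∀ x, 0 ≤ w x)
    (hu : Integrable (fun x => w x * u x ^ 2) μ) (hv : Integrable (fun x => w x * v x ^ 2) μ)
    (hmeas : AEStronglyMeasurable (fun x => w x * (u x * v x)) μ) :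
    Integrable (fun x => w x * (u x * v x)) μ := by
  refine ((hu.add hv).div_const 2).mono' hmeas (ae_of_all _ fun x => ?_)
  have hamgm : |u x * v x| ≤ (u x ^ 2 + v x ^ 2) / 2 := by
    rw [abs_mul, le_div_iff₀ two_pos, ← sq_abs (u x), ← sq_abs (v x)]
    nlinarith [sq_nonneg (|u x| - |v x|)]
  calc ‖w x * (u x * v x)‖ = w x * |u x * v x| := by
        rw [Real.norm_eq_abs, abs_mul, abs_of_nonneg (hw x)]
    _ ≤ w x * ((u x ^ 2 + v x ^ 2) / 2) := mul_le_mul_of_nonneg_left hamgm (hw x)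
    _ = (w x * u x ^ 2 + w x * v x ^ 2) / 2 := by ring

theorem hasDerivAt_exp_mul_sq {δ t y' : ℝ} {ψ : ℝ → ℝ} (hψ : HasDerivAt ψ y' t) :
    HasDerivAt (fun t => Real.exp (2 * δ * t) * ψ t ^ 2)
      (2 * δ * (Real.exp (2 * δ * t) * ψ t ^ 2)
        + 2 * (Real.exp (2 * δ * t) * (ψ t * y'))) t := by
  have hexp : HasDerivAt (fun t => Real.exp (2 * δ * t)) (Real.exp (2 * δ * t) * (2 * δ)) t :=
    ((hasDerivAt_id t).const_mul (2 * δ)).exp.congr_deriv (by simp)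
  exact (hexp.fun_mul (hψ.fun_pow 2)).congr_deriv (by push_cast; ring)

theorem integrableOn_exp_mul_mul_deriv {a lam δ : ℝ} {ψ ψ' : ℝ → ℝ}
    (hderiv : ∀ t ∈ Ioi a, HasDerivAt ψ (ψ' t) t)
    (hψ : IntegrableOn (fun t => Real.exp (2 * δ * t) * ψ t ^ 2) (Ioi a))
    (hf : IntegrableOn (fun t => Real.exp (2 * δ * t) * (ψ' t + lam * ψ t) ^ 2) (Ioi a)) :
    IntegrableOn (fun t => Real.exp (2 * δ * t) * (ψ t * ψ' t)) (Ioi a) := by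
  have hψc : ContinuousOn ψ (Ioi a) := fun t ht => (hderiv t ht).continuousAt.continuousWithinAt
  have hmeas : AEStronglyMeasurable
      (fun t => Real.exp (2 * δ * t) * (ψ t * (ψ' t + lam * ψ t))) (volume.restrict (Ioi a)) :=
    (by fun_prop : Continuous fun t => Real.exp (2 * δ * t)).aestronglyMeasurable.mul <|
      (hψc.aestronglyMeasurable measurableSet_Ioi).mul <|
        (AEStronglyMeasurable.of_hasDerivAt measurableSet_Ioi hderiv).add
          ((hψc.aestronglyMeasurable measurableSet_Ioi).const_mul _)
  have hψf :=
    Integrable.weight_mul_mul_of_weight_mul_sq (fun t => (Real.exp_pos _).le) hψ hf hmeas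
  exact (hψf.sub (hψ.const_mul lam)).congr <|
    ae_of_all _ fun t => by simp only [Pi.sub_apply]; ring

theorem integral_Ioi_deriv_exp_mul_sq (a δ : ℝ) {ψ ψ' : ℝ → ℝ}
    (hderiv : ∀ t ∈ Ici a, HasDerivAt ψ (ψ' t) t)
    (hdecay : Tendsto (fun t => Real.exp (δ * t) * ψ t) atTop (𝓝 0))
    (hψ : IntegrableOn (fun t => Real.exp (2 * δ * t) * ψ t ^ 2) (Ioi a))
    (hψψ' : IntegrableOn (fun t => Real.exp (2 * δ * t) * (ψ t * ψ' t)) (Ioi a)) :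
    ∫ t in Ioi a, (2 * δ * (Real.exp (2 * δ * t) * ψ t ^ 2)
        + 2 * (Real.exp (2 * δ * t) * (ψ t * ψ' t))) = -(Real.exp (2 * δ * a) * ψ a ^ 2) := by
  have hlim : Tendsto (fun t => Real.exp (2 * δ * t) * ψ t ^ 2) atTop (𝓝 0) := by
    convert hdecay.pow 2 using 2 with t
    · rw [mul_pow, sq (Real.exp _), ← Real.exp_add, two_mul, add_mul]
    · simp
  exact (integral_Ioi_of_hasDerivAt_of_tendsto' (fun t ht => hasDerivAt_exp_mul_sq (hderiv t ht))
    ((hψ.const_mul _).add (hψψ'.const_mul _)) hlim).trans (zero_sub _)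

theorem mul_deriv_exp_mul_sq_add_le (lam δ ε w x y : ℝ) (hε : 0 < ε) (hw : 0 ≤ w) :
    lam * (2 * δ * (w * x ^ 2) + 2 * (w * (x * y)))
        + (lam ^ 2 - δ ^ 2 - ε * δ ^ 2) * (w * x ^ 2)
      ≤ (1 + 1 / ε) * (w * (y + lam * x) ^ 2) := by
  rw [← sub_nonneg]
  have hsos : (1 + 1 / ε) * (w * (y + lam * x) ^ 2)
      - (lam * (2 * δ * (w * x ^ 2) + 2 * (w * (x * y)))
        + (lam ^ 2 - δ ^ 2 - ε * δ ^ 2) * (w * x ^ 2))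
      = w * ((ε * δ * x - (y + lam * x)) ^ 2 / ε + (δ * x + y) ^ 2) := by
    field_simp
    ring
  rw [hsos]
  positivity

theorem integrated_weighted_estimate_nonzero_mode_general
    (lam : ℝ) (δ ε : ℝ) (hε : 0 < ε)
    (ψ ψ' f : ℝ → ℝ)
    (hderiv : ∀ t ∈ Ici (0 : ℝ), HasDerivAt ψ (ψ' t) t)
    (hf : ∀ t, f t = ψ' t + lam * ψ t)
    (hdecay : Tendsto (fun t => Real.exp (δ * t) * ψ t) atTop (nhds 0))
    (hint₁ : IntegrableOn (fun t => Real.exp (2 * δ * t) * (ψ t) ^ 2) (Ioi 0))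
    (hint₂ : IntegrableOn (fun t => Real.exp (2 * δ * t) * (f t) ^ 2) (Ioi 0)) :
    (lam ^ 2 - δ ^ 2 - ε * δ ^ 2) *
        ∫ t in Ioi (0 : ℝ), Real.exp (2 * δ * t) * (ψ t) ^ 2 ≤
      (1 + 1 / ε) * (∫ t in Ioi (0 : ℝ), Real.exp (2 * δ * t) * (f t) ^ 2)
        + lam * (ψ 0) ^ 2 := by
  obtain rfl : f = fun t => ψ' t + lam * ψ t := funext hf
  have hψψ' :=
    integrableOn_exp_mul_mul_deriv (fun t ht => hderiv t (mem_Ici_of_Ioi ht)) hint₁ hint₂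
  have henergy := integral_Ioi_deriv_exp_mul_sq 0 δ hderiv hdecay hint₁ hψψ'
  have hderiv_int : IntegrableOn (fun t => 2 * δ * (Real.exp (2 * δ * t) * ψ t ^ 2)
      + 2 * (Real.exp (2 * δ * t) * (ψ t * ψ' t))) (Ioi 0) :=
    (hint₁.const_mul _).add (hψψ'.const_mul _)
  have hmono : ∫ t in Ioi 0, (lam * (2 * δ * (Real.exp (2 * δ * t) * ψ t ^ 2)
        + 2 * (Real.exp (2 * δ * t) * (ψ t * ψ' t)))
        + (lam ^ 2 - δ ^ 2 - ε * δ ^ 2) * (Real.exp (2 * δ * t) * ψ t ^ 2))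
      ≤ ∫ t in Ioi 0, (1 + 1 / ε) * (Real.exp (2 * δ * t) * (ψ' t + lam * ψ t) ^ 2) :=
    setIntegral_mono_on ((hderiv_int.const_mul lam).add (hint₁.const_mul _))
      (hint₂.const_mul _) measurableSet_Ioi fun t _ =>
        mul_deriv_exp_mul_sq_add_le lam δ ε _ (ψ t) (ψ' t) hε (Real.exp_pos _).le
  rw [integral_add (hderiv_int.const_mul lam) (hint₁.const_mul _), integral_const_mul,
    integral_const_mul, integral_const_mul, henergy] at hmono
  simp only [mul_zero, Real.exp_zero, one_mul] at hmono
  linarith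

/-- Integrated exponentially weighted `L²` estimate for nonzero modes on the
half line: with `f = ψ' + λψ`, if `e^{δt}ψ(t) → 0` at infinity and the weighted
squares are integrable, then
`(λ² − δ² − εδ²) ∫₀^∞ e^{2δt}ψ² ≤ (1 + 1/ε) ∫₀^∞ e^{2δt}f² + λ ψ(0)²`. -/
theorem integrated_weighted_estimate_nonzero_mode
    (lam : ℝ) (hlam : lam ≠ 0) (δ ε : ℝ) (hδ : 0 < δ) (hε : 0 < ε)
    (ψ ψ' f : ℝ → ℝ)
    (hderiv : ∀ t ∈ Ici (0 : ℝ), HasDerivAt ψ (ψ' t) t)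
    (hcont : ContinuousOn ψ' (Ici (0 : ℝ)))
    (hf : ∀ t, f t = ψ' t + lam * ψ t)
    (hdecay : Tendsto (fun t => Real.exp (δ * t) * ψ t) atTop (nhds 0))
    (hint₁ : IntegrableOn (fun t => Real.exp (2 * δ * t) * (ψ t) ^ 2) (Ioi 0))
    (hint₂ : IntegrableOn (fun t => Real.exp (2 * δ * t) * (f t) ^ 2) (Ioi 0)) :
    (lam ^ 2 - δ ^ 2 - ε * δ ^ 2) *
        ∫ t in Ioi (0 : ℝ), Real.exp (2 * δ * t) * (ψ t) ^ 2 ≤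
      (1 + 1 / ε) * (∫ t in Ioi (0 : ℝ), Real.exp (2 * δ * t) * (f t) ^ 2)
        + lam * (ψ 0) ^ 2 :=
  integrated_weighted_estimate_nonzero_mode_general lam δ ε hε ψ ψ' f hderiv hf hdecay hint₁ hint₂
end

section
/- Let δ > 0, ε > 0, and let ψ : [0, ∞) → ℝ be continuously differentiable with f(t) = ψ'(t). Assume e^{δt}ψ(t) → 0 as t → ∞ and that the functions t ↦ e^{2δt}ψ(t)² and t ↦ e^{2δt}f(t)² are integrable on (0, ∞). Then (δ − ε/2) ∫₀^∞ e^{2δt}ψ(t)² dt ≤ (1/(2ε)) ∫₀^∞ e^{2δt}f(t)² dt − ψ(0)²/2. -/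
open MeasureTheory Set Filter

/-!
With `g(t) = e^{2δt} ψ(t)²` we have `g' = 2δ e^{2δt} ψ² + 2 e^{2δt} ψ ψ'`, and Young's
inequality `2ψψ' ≥ -ε ψ² - ψ'²/ε` bounds `g'` below by
`(2δ - ε) e^{2δt} ψ² - ε⁻¹ e^{2δt} ψ'²`. Since `g → 0` at infinity,
`∫₀^∞ g' = -g(0) = -ψ(0)²`; integrating the lower bound and halving gives the estimate.
-/

lemma neg_add_inv_mul_le_two_mul {ε : ℝ} (hε : 0 < ε) (a b : ℝ) :
    -(ε * a ^ 2 + ε⁻¹ * b ^ 2) ≤ 2 * a * b := by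
  have key : 0 ≤ ε⁻¹ * (ε * a + b) ^ 2 := by positivity
  have expand : ε⁻¹ * (ε * a + b) ^ 2 = ε * a ^ 2 + ε⁻¹ * b ^ 2 + 2 * a * b := by
    field_simp
    ring
  linarith

lemma integrable_mul_mul_of_integrable_mul_sq {α : Type*} [MeasurableSpace α] {μ : Measure α}
    {w u v : α → ℝ} (hw : ∀ x, 0 ≤ w x)
    (hmeas : AEStronglyMeasurable (fun x => w x * (u x * v x)) μ)
    (hu : Integrable (fun x => w x * u x ^ 2) μ) (hv : Integrable (fun x => w x * v x ^ 2) μ) :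
    Integrable (fun x => w x * (u x * v x)) μ := by
  refine (hu.add hv).mono hmeas (ae_of_all _ fun x => ?_)
  have huv : |u x * v x| ≤ u x ^ 2 + v x ^ 2 := by
    rw [abs_le]
    constructor <;> nlinarith [sq_nonneg (u x + v x), sq_nonneg (u x - v x)]
  have hsum : 0 ≤ w x * u x ^ 2 + w x * v x ^ 2 := by
    rw [← mul_add]
    exact mul_nonneg (hw x) (by positivity)
  rw [Pi.add_apply, Real.norm_eq_abs, Real.norm_eq_abs, abs_mul, abs_of_nonneg (hw x),
    abs_of_nonneg hsum, ← mul_add]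
  exact mul_le_mul_of_nonneg_left huv (hw x)

lemma hasDerivAt_exp_mul_mul_sq {ψ : ℝ → ℝ} {ψ' c t : ℝ} (hψ : HasDerivAt ψ ψ' t) :
    HasDerivAt (fun t => Real.exp (c * t) * ψ t ^ 2)
      (c * (Real.exp (c * t) * ψ t ^ 2) + Real.exp (c * t) * (2 * ψ t * ψ')) t := by
  have hexp : HasDerivAt (fun t => Real.exp (c * t)) (Real.exp (c * t) * c) t :=
    ((hasDerivAt_id t).const_mul c).exp.congr_deriv (by simp)
  refine (hexp.fun_mul (hψ.fun_pow 2)).congr_deriv ?_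
  push_cast
  ring

lemma aestronglyMeasurable_mul_of_hasDerivAt {ψ ψ' : ℝ → ℝ} {s : Set ℝ}
    (hs : MeasurableSet s) (hderiv : ∀ t ∈ s, HasDerivAt ψ (ψ' t) t) :
    AEStronglyMeasurable (fun t => ψ t * ψ' t) (volume.restrict s) := by
  have hψ : AEStronglyMeasurable ψ (volume.restrict s) :=
    ContinuousOn.aestronglyMeasurable
      (fun t ht => (hderiv t ht).continuousAt.continuousWithinAt) hs
  have hψ' : AEStronglyMeasurable ψ' (volume.restrict s) :=
    (measurable_deriv ψ).aestronglyMeasurable.congr <|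
      (ae_restrict_mem hs).mono fun t ht => (hderiv t ht).deriv
  exact hψ.mul hψ'

lemma setIntegral_Ioi_le_neg_of_hasDerivAt {g g' h : ℝ → ℝ} {a : ℝ}
    (hderiv : ∀ t ∈ Ici a, HasDerivAt g (g' t) t) (hg' : IntegrableOn g' (Ioi a))
    (hg : Tendsto g atTop (nhds 0)) (hh : IntegrableOn h (Ioi a))
    (hle : ∀ t ∈ Ioi a, h t ≤ g' t) :
    ∫ t in Ioi a, h t ≤ -g a := by
  calc ∫ t in Ioi a, h t ≤ ∫ t in Ioi a, g' t :=
        setIntegral_mono_on hh hg' measurableSet_Ioi hle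
    _ = -g a := by rw [integral_Ioi_of_hasDerivAt_of_tendsto' hderiv hg' hg, zero_sub]

theorem integrated_weighted_estimate_zero_mode_general
    (δ ε : ℝ) (hε : 0 < ε)
    (ψ ψ' f : ℝ → ℝ)
    (hderiv : ∀ t ∈ Ici (0 : ℝ), HasDerivAt ψ (ψ' t) t)
    (hf : ∀ t, f t = ψ' t)
    (hdecay : Tendsto (fun t => Real.exp (δ * t) * ψ t) atTop (nhds 0))
    (hint₁ : IntegrableOn (fun t => Real.exp (2 * δ * t) * (ψ t) ^ 2) (Ioi 0))
    (hint₂ : IntegrableOn (fun t => Real.exp (2 * δ * t) * (f t) ^ 2) (Ioi 0)) :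
    (δ - ε / 2) * ∫ t in Ioi (0 : ℝ), Real.exp (2 * δ * t) * (ψ t) ^ 2 ≤
      (1 / (2 * ε)) * (∫ t in Ioi (0 : ℝ), Real.exp (2 * δ * t) * (f t) ^ 2)
        - (ψ 0) ^ 2 / 2 := by
  obtain rfl : f = ψ' := funext hf
  have hmeas := aestronglyMeasurable_mul_of_hasDerivAt measurableSet_Ioi
    fun t ht => hderiv t (mem_Ici_of_Ioi ht)
  have hcross : IntegrableOn (fun t => Real.exp (2 * δ * t) * (2 * ψ t * f t)) (Ioi 0) := by
    refine ((integrable_mul_mul_of_integrable_mul_sq (fun t => (Real.exp_pos _).le)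
      ((by fun_prop : Continuous fun t => Real.exp (2 * δ * t)).aestronglyMeasurable.mul
        hmeas) hint₁ hint₂).const_mul 2).congr (ae_of_all _ fun t => ?_)
    ring
  have hdecay_sq : Tendsto (fun t => Real.exp (2 * δ * t) * ψ t ^ 2) atTop (nhds 0) := by
    convert hdecay.pow 2 using 2 with t
    · rw [mul_pow, ← Real.exp_nat_mul]
      ring_nf
    · norm_num
  have hmain := setIntegral_Ioi_le_neg_of_hasDerivAt
    (h := fun t => (2 * δ - ε) * (Real.exp (2 * δ * t) * ψ t ^ 2) -
      ε⁻¹ * (Real.exp (2 * δ * t) * f t ^ 2))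
    (fun t ht => hasDerivAt_exp_mul_mul_sq (hderiv t ht))
    ((hint₁.const_mul (2 * δ)).add hcross) hdecay_sq
    ((hint₁.const_mul (2 * δ - ε)).sub' (hint₂.const_mul ε⁻¹))
    (fun t _ => by
      linear_combination mul_le_mul_of_nonneg_left (neg_add_inv_mul_le_two_mul hε (ψ t) (f t))
        (Real.exp_pos (2 * δ * t)).le)
  rw [integral_sub (hint₁.const_mul _) (hint₂.const_mul _), integral_const_mul,
    integral_const_mul] at hmain
  simp only [mul_zero, Real.exp_zero, one_mul] at hmain
  have : (1 : ℝ) / (2 * ε) = ε⁻¹ / 2 := by ring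
  rw [this]
  linarith

/-- Integrated exponentially weighted `L²` estimate for the zero mode on the
half line: with `f = ψ'`, if `e^{δt}ψ(t) → 0` at infinity and the weighted
squares are integrable, then
`(δ − ε/2) ∫₀^∞ e^{2δt}ψ² ≤ (1/(2ε)) ∫₀^∞ e^{2δt}f² − ψ(0)²/2`. -/
theorem integrated_weighted_estimate_zero_mode
    (δ ε : ℝ) (hδ : 0 < δ) (hε : 0 < ε)
    (ψ ψ' f : ℝ → ℝ)
    (hderiv : ∀ t ∈ Ici (0 : ℝ), HasDerivAt ψ (ψ' t) t)
    (hcont : ContinuousOn ψ' (Ici (0 : ℝ)))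
    (hf : ∀ t, f t = ψ' t)
    (hdecay : Tendsto (fun t => Real.exp (δ * t) * ψ t) atTop (nhds 0))
    (hint₁ : IntegrableOn (fun t => Real.exp (2 * δ * t) * (ψ t) ^ 2) (Ioi 0))
    (hint₂ : IntegrableOn (fun t => Real.exp (2 * δ * t) * (f t) ^ 2) (Ioi 0)) :
    (δ - ε / 2) * ∫ t in Ioi (0 : ℝ), Real.exp (2 * δ * t) * (ψ t) ^ 2 ≤
      (1 / (2 * ε)) * (∫ t in Ioi (0 : ℝ), Real.exp (2 * δ * t) * (f t) ^ 2)
        - (ψ 0) ^ 2 / 2 :=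
  integrated_weighted_estimate_zero_mode_general δ ε hε ψ ψ' f hderiv hf hdecay hint₁ hint₂
end

section
/- Let H be a real Hilbert space, L : H → H a self-adjoint bounded linear operator, and c > 0 a constant with c‖x‖ ≤ ‖Lx‖ for all x ∈ H. Let ψ : ℝ → H be continuously differentiable with compact support. Then c² ∫_ℝ ‖ψ(t)‖² dt ≤ ∫_ℝ ‖ψ'(t) + L(ψ(t))‖² dt. -/
/-!
Expand `‖ψ' + Lψ‖² = ‖ψ'‖² + 2⟪ψ', Lψ⟫ + ‖Lψ‖²`. Since `L` is symmetric, `2⟪ψ', Lψ⟫` is the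
derivative of the compactly supported function `t ↦ ⟪ψ t, L (ψ t)⟫`, so the cross term integrates
to zero. What remains is `∫ ‖ψ'‖² + ∫ ‖Lψ‖² ≥ ∫ ‖Lψ‖² ≥ c² ∫ ‖ψ‖²` by the spectral gap.
-/

open MeasureTheory
open scoped RealInnerProductSpace

section CompactSupport

variable {α E : Type*} [TopologicalSpace α] [NormedAddCommGroup E]

theorem HasCompactSupport.inner_left {𝕜 : Type*} [RCLike 𝕜] [InnerProductSpace 𝕜 E] {f : α → E}
    (hf : HasCompactSupport f) (g : α → E) : HasCompactSupport fun x => inner 𝕜 (f x) (g x) :=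
  hf.mono fun x hx h0 => hx (by simp [h0])

theorem HasCompactSupport.norm_sq {f : α → E} (hf : HasCompactSupport f) :
    HasCompactSupport fun x => ‖f x‖ ^ 2 :=
  hf.norm.comp_left (g := fun r : ℝ => r ^ 2) (zero_pow two_ne_zero)

end CompactSupport

section Integral

variable {α E : Type*} [TopologicalSpace α] [MeasurableSpace α] [OpensMeasurableSpace α]
  {μ : Measure α} [IsFiniteMeasureOnCompacts μ] [NormedAddCommGroup E]

theorem Continuous.integrable_norm_sq_of_hasCompactSupport {f : α → E} (hf : Continuous f)
    (hfs : HasCompactSupport f) : Integrable (fun x => ‖f x‖ ^ 2) μ :=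
  (hf.norm.pow 2).integrable_of_hasCompactSupport hfs.norm_sq

theorem integral_norm_add_sq_of_hasCompactSupport [InnerProductSpace ℝ E] {f g : α → E}
    (hf : Continuous f) (hfs : HasCompactSupport f) (hg : Continuous g)
    (hgs : HasCompactSupport g) :
    ∫ x, ‖f x + g x‖ ^ 2 ∂μ =
      ∫ x, ‖f x‖ ^ 2 ∂μ + 2 * ∫ x, ⟪f x, g x⟫ ∂μ + ∫ x, ‖g x‖ ^ 2 ∂μ := by
  have hf2 := hf.integrable_norm_sq_of_hasCompactSupport (μ := μ) hfs
  have hfg : Integrable (fun x => ⟪f x, g x⟫) μ :=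
    (hf.inner hg).integrable_of_hasCompactSupport (hfs.inner_left g)
  have hf2fg : Integrable (fun x => ‖f x‖ ^ 2 + 2 * ⟪f x, g x⟫) μ := hf2.add (hfg.const_mul 2)
  simp_rw [norm_add_sq_real]
  rw [integral_add hf2fg (hg.integrable_norm_sq_of_hasCompactSupport hgs),
    integral_add hf2 (hfg.const_mul 2), integral_const_mul]

end Integral

section Symmetric

variable {E : Type*} [NormedAddCommGroup E] [InnerProductSpace ℝ E] {T : E →L[ℝ] E}

theorem HasDerivAt.inner_map_of_isSymmetric (hT : (T : E →ₗ[ℝ] E).IsSymmetric) {f : ℝ → E}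
    {f' : E} {t : ℝ} (hf : HasDerivAt f f' t) :
    HasDerivAt (fun s => ⟪f s, T (f s)⟫) (2 * ⟪f', T (f t)⟫) t := by
  refine (hf.inner ℝ (T.hasFDerivAt.comp_hasDerivAt t hf)).congr_deriv ?_
  rw [← hT.apply_clm (f t) f', Function.comp_apply, real_inner_comm]
  ring

theorem integral_inner_deriv_map_self_eq_zero (hT : (T : E →ₗ[ℝ] E).IsSymmetric) {ψ : ℝ → E}
    (hψ : ContDiff ℝ 1 ψ) (hs : HasCompactSupport ψ) : ∫ t, ⟪deriv ψ t, T (ψ t)⟫ = 0 := by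
  have hTψ : Continuous fun t => T (ψ t) := T.continuous.comp hψ.continuous
  have hderiv (t : ℝ) :
      HasDerivAt (fun s => ⟪ψ s, T (ψ s)⟫) (2 * ⟪deriv ψ t, T (ψ t)⟫) t :=
    ((hψ.differentiable one_ne_zero) t).hasDerivAt.inner_map_of_isSymmetric hT
  have hcross : Integrable fun t => ⟪deriv ψ t, T (ψ t)⟫ :=
    ((hψ.continuous_deriv le_rfl).inner hTψ).integrable_of_hasCompactSupport
      (hs.deriv.inner_left _)
  have h := integral_eq_zero_of_hasDerivAt_of_integrable hderiv (hcross.const_mul 2)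
    ((hψ.continuous.inner hTψ).integrable_of_hasCompactSupport (hs.inner_left _))
  rw [integral_const_mul] at h
  exact (mul_eq_zero.1 h).resolve_left two_ne_zero

end Symmetric

theorem cylinder_apriori_estimate_general {H : Type*}
    [NormedAddCommGroup H] [InnerProductSpace ℝ H]
    (L : H →L[ℝ] H)
    (hsa : ∀ x y : H, (inner ℝ (L x) y : ℝ) = inner ℝ x (L y))
    (c : ℝ) (hc : 0 < c) (hgap : ∀ x : H, c * ‖x‖ ≤ ‖L x‖)
    (ψ : ℝ → H) (hψ : ContDiff ℝ 1 ψ) (hsupp : HasCompactSupport ψ) :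
    c ^ 2 * ∫ t : ℝ, ‖ψ t‖ ^ 2 ≤ ∫ t : ℝ, ‖deriv ψ t + L (ψ t)‖ ^ 2 := by
  have hLψ : Continuous fun t => L (ψ t) := L.continuous.comp hψ.continuous
  have hLψs : HasCompactSupport fun t => L (ψ t) := hsupp.comp_left L.map_zero
  have hgap_sq : c ^ 2 * ∫ t, ‖ψ t‖ ^ 2 ≤ ∫ t, ‖L (ψ t)‖ ^ 2 := by
    rw [← integral_const_mul]
    refine integral_mono_of_nonneg (ae_of_all _ fun t => by positivity)
      (hLψ.integrable_norm_sq_of_hasCompactSupport hLψs) (ae_of_all _ fun t => ?_)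
    simpa only [mul_pow] using pow_le_pow_left₀ (by positivity) (hgap (ψ t)) 2
  have hderiv_sq : 0 ≤ ∫ t, ‖deriv ψ t‖ ^ 2 := integral_nonneg fun t => by positivity
  rw [integral_norm_add_sq_of_hasCompactSupport (hψ.continuous_deriv le_rfl) hsupp.deriv hLψ hLψs,
    integral_inner_deriv_map_self_eq_zero hsa hψ hsupp]
  linarith

/-- A priori estimate on the perfect cylinder: if `L` is a self-adjoint bounded
operator on a real Hilbert space with spectral gap `c` (`c‖x‖ ≤ ‖Lx‖`), then for
every compactly supported `C¹` function `ψ : ℝ → H`,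
`c² ∫ ‖ψ‖² ≤ ∫ ‖ψ' + Lψ‖²`. -/
theorem cylinder_apriori_estimate {H : Type*}
    [NormedAddCommGroup H] [InnerProductSpace ℝ H] [CompleteSpace H]
    (L : H →L[ℝ] H)
    (hsa : ∀ x y : H, (inner ℝ (L x) y : ℝ) = inner ℝ x (L y))
    (c : ℝ) (hc : 0 < c) (hgap : ∀ x : H, c * ‖x‖ ≤ ‖L x‖)
    (ψ : ℝ → H) (hψ : ContDiff ℝ 1 ψ) (hsupp : HasCompactSupport ψ) :
    c ^ 2 * ∫ t : ℝ, ‖ψ t‖ ^ 2 ≤ ∫ t : ℝ, ‖deriv ψ t + L (ψ t)‖ ^ 2 :=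
  cylinder_apriori_estimate_general L hsa c hc hgap ψ hψ hsupp
end

section
/- Let H be a real Hilbert space, L : H → H a self-adjoint bounded linear operator, c > 0 a constant with c‖x‖ ≤ ‖Lx‖ for all x ∈ H, and let E : ℝ → B(H) be a continuous family of bounded linear operators with ‖E(t)‖ ≤ ε for all t, where 0 ≤ ε ≤ c. Let ψ : ℝ → H be continuously differentiable with compact support. Then (c − ε)² ∫_ℝ ‖ψ(t)‖² dt ≤ ∫_ℝ ‖ψ'(t) + L(ψ(t)) + E(t)(ψ(t))‖² dt. -/
open MeasureTheory

/-- Perturbed a priori estimate on the cylinder: the estimate for `d/dt + L`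
with spectral gap `c` survives a perturbation `E(t)` of uniform operator norm
at most `ε ≤ c`: `(c − ε)² ∫ ‖ψ‖² ≤ ∫ ‖ψ' + Lψ + E(t)ψ‖²`. -/
theorem cylinder_perturbed_apriori_estimate {H : Type*}
    [NormedAddCommGroup H] [InnerProductSpace ℝ H] [CompleteSpace H]
    (L : H →L[ℝ] H)
    (hsa : ∀ x y : H, (inner ℝ (L x) y : ℝ) = inner ℝ x (L y))
    (c : ℝ) (hc : 0 < c) (hgap : ∀ x : H, c * ‖x‖ ≤ ‖L x‖)
    (E : ℝ → H →L[ℝ] H) (hEcont : Continuous E)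
    (ε : ℝ) (hε0 : 0 ≤ ε) (hεc : ε ≤ c) (hE : ∀ t, ‖E t‖ ≤ ε)
    (ψ : ℝ → H) (hψ : ContDiff ℝ 1 ψ) (hsupp : HasCompactSupport ψ) :
    (c - ε) ^ 2 * ∫ t : ℝ, ‖ψ t‖ ^ 2 ≤
      ∫ t : ℝ, ‖deriv ψ t + L (ψ t) + E t (ψ t)‖ ^ 2 := by
  classical
  set f : ℝ → H := fun t => deriv ψ t + L (ψ t) with hf_def
  set g : ℝ → H := fun t => E t (ψ t) with hg_def
  have hψc : Continuous ψ := hψ.continuous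
  have hdc : Continuous (deriv ψ) := hψ.continuous_deriv le_rfl
  have hLc : Continuous fun t => L (ψ t) := L.continuous.comp hψc
  have hfc : Continuous f := hdc.add hLc
  have hgc : Continuous g := hEcont.clm_apply hψc
  have hψ0 : ∀ t ∉ tsupport ψ, ψ t = 0 := fun t ht =>
    image_eq_zero_of_notMem_tsupport ht
  have hd0 : ∀ t ∉ tsupport ψ, deriv ψ t = 0 := by
    intro t ht
    by_contra h
    exact ht (support_deriv_subset (by simpa using h))
  -- compact support helper for vector-valued functions
  have hsupports : ∀ u : ℝ → H, (∀ t ∉ tsupport ψ, u t = 0) → HasCompactSupport u := by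
    intro u h0
    exact hsupp.mono' fun t ht => by_contra fun hts => ht (h0 t hts)
  have hfs : HasCompactSupport f := hsupports f fun t ht => by
    simp [hf_def, hψ0 t ht, hd0 t ht]
  have hgs : HasCompactSupport g := hsupports g fun t ht => by
    simp [hg_def, hψ0 t ht]
  -- integrability helper for scalar functions
  have hI : ∀ u : ℝ → ℝ, Continuous u → (∀ t ∉ tsupport ψ, u t = 0) →
      Integrable u := by
    intro u hu h0
    exact hu.integrable_of_hasCompactSupport
      (hsupp.mono' fun t ht => by_contra fun hts => ht (h0 t hts))
  have iA : Integrable fun t => ‖ψ t‖ ^ 2 :=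
    hI _ (hψc.norm.pow 2) fun t ht => by simp [hψ0 t ht]
  have id2 : Integrable fun t => ‖deriv ψ t‖ ^ 2 :=
    hI _ (hdc.norm.pow 2) fun t ht => by simp [hd0 t ht]
  have iL2 : Integrable fun t => ‖L (ψ t)‖ ^ 2 :=
    hI _ (hLc.norm.pow 2) fun t ht => by simp [hψ0 t ht]
  have icross : Integrable fun t => (inner ℝ (deriv ψ t) (L (ψ t)) : ℝ) :=
    hI _ (hdc.inner hLc) fun t ht => by simp [hψ0 t ht]
  have if2 : Integrable fun t => ‖f t‖ ^ 2 :=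
    hI _ (hfc.norm.pow 2) fun t ht => by simp [hf_def, hψ0 t ht, hd0 t ht]
  have ig2 : Integrable fun t => ‖g t‖ ^ 2 :=
    hI _ (hgc.norm.pow 2) fun t ht => by simp [hg_def, hψ0 t ht]
  have ifg : Integrable fun t => (inner ℝ (f t) (g t) : ℝ) :=
    hI _ (hfc.inner hgc) fun t ht => by simp [hg_def, hψ0 t ht]
  have iprod : Integrable fun t => ‖f t‖ * ‖g t‖ :=
    hI _ (hfc.norm.mul hgc.norm) fun t ht => by simp [hg_def, hψ0 t ht]
  -- Integration by parts: the cross term `∫ ⟪ψ', Lψ⟫` vanishes.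
  have hψd : Differentiable ℝ ψ := hψ.differentiable one_ne_zero
  have hL1 : ContDiff ℝ 1 fun t => L (ψ t) := L.contDiff.comp hψ
  set φ : ℝ → ℝ := fun t => (inner ℝ (ψ t) (L (ψ t)) : ℝ) with hφ_def
  have hφ1 : ContDiff ℝ 1 φ := ContDiff.inner ℝ hψ hL1
  have hder : ∀ t, HasDerivAt φ (2 * (inner ℝ (deriv ψ t) (L (ψ t)) : ℝ)) t := by
    intro t
    have h1 : HasDerivAt ψ (deriv ψ t) t := (hψd t).hasDerivAt
    have h2 : HasDerivAt (fun t => L (ψ t)) (L (deriv ψ t)) t :=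
      L.hasFDerivAt.comp_hasDerivAt t h1
    have h3 := HasDerivAt.inner ℝ h1 h2
    refine h3.congr_deriv ?_
    have h4 : (inner ℝ (ψ t) (L (deriv ψ t)) : ℝ) = inner ℝ (deriv ψ t) (L (ψ t)) := by
      rw [← hsa]
      exact real_inner_comm _ _
    rw [h4]
    ring
  have hφs : HasCompactSupport φ :=
    hsupp.mono' fun t ht => by_contra fun hts => ht (by simp [hφ_def, hψ0 t hts])
  have hφderiv : deriv φ = fun t => 2 * (inner ℝ (deriv ψ t) (L (ψ t)) : ℝ) :=
    funext fun t => (hder t).deriv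
  have hintd : Integrable (deriv φ) :=
    (hφ1.continuous_deriv le_rfl).integrable_of_hasCompactSupport hφs.deriv
  have h00 : ∫ t, deriv φ t = 0 := by
    rw [← intervalIntegral.integral_Iic_add_Ioi (b := 0) hintd.integrableOn hintd.integrableOn,
      HasCompactSupport.integral_Iic_deriv_eq hφ1 hφs 0,
      HasCompactSupport.integral_Ioi_deriv_eq hφ1 hφs 0]
    ring
  have hcross : ∫ t, (inner ℝ (deriv ψ t) (L (ψ t)) : ℝ) = 0 := by
    rw [hφderiv] at h00
    rw [integral_const_mul] at h00
    linarith
  -- abbreviations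
  set A := ∫ t : ℝ, ‖ψ t‖ ^ 2 with hA_def
  set F := ∫ t : ℝ, ‖f t‖ ^ 2 with hF_def
  set G := ∫ t : ℝ, ‖g t‖ ^ 2 with hG_def
  have hA0 : 0 ≤ A := integral_nonneg fun t => by positivity
  have hF0 : 0 ≤ F := integral_nonneg fun t => by positivity
  have hG0 : 0 ≤ G := integral_nonneg fun t => by positivity
  -- Lower bound: `c^2 * A ≤ F`
  have hFsplit : F = (∫ t, ‖deriv ψ t‖ ^ 2) +
      ((∫ t, 2 * (inner ℝ (deriv ψ t) (L (ψ t)) : ℝ)) + ∫ t, ‖L (ψ t)‖ ^ 2) := by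
    rw [hF_def]
    have heq : (fun t => ‖f t‖ ^ 2) = fun t =>
        ‖deriv ψ t‖ ^ 2 + (2 * (inner ℝ (deriv ψ t) (L (ψ t)) : ℝ) + ‖L (ψ t)‖ ^ 2) :=
      funext fun t => by
        simpa [add_assoc] using norm_add_sq_real (deriv ψ t) (L (ψ t))
    have i1 : Integrable fun t =>
        2 * (inner ℝ (deriv ψ t) (L (ψ t)) : ℝ) + ‖L (ψ t)‖ ^ 2 :=
      (icross.const_mul 2).add iL2
    rw [heq, integral_add id2 i1, integral_add (icross.const_mul 2) iL2]
  have hLlow : c ^ 2 * A ≤ ∫ t, ‖L (ψ t)‖ ^ 2 := by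
    rw [hA_def, ← integral_const_mul]
    refine integral_mono (iA.const_mul _) iL2 fun t => ?_
    have := pow_le_pow_left₀ (by positivity) (hgap (ψ t)) 2
    calc c ^ 2 * ‖ψ t‖ ^ 2 = (c * ‖ψ t‖) ^ 2 := by ring
      _ ≤ ‖L (ψ t)‖ ^ 2 := this
  have hd2nn : 0 ≤ ∫ t, ‖deriv ψ t‖ ^ 2 := integral_nonneg fun t => by positivity
  have hF : c ^ 2 * A ≤ F := by
    rw [hFsplit, integral_const_mul, hcross]
    linarith
  -- Upper bound: `G ≤ ε^2 * A`
  have hG : G ≤ ε ^ 2 * A := by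
    rw [hG_def, hA_def, ← integral_const_mul]
    refine integral_mono ig2 (iA.const_mul _) fun t => ?_
    have h1 : ‖g t‖ ≤ ε * ‖ψ t‖ :=
      ((E t).le_opNorm (ψ t)).trans
        (mul_le_mul_of_nonneg_right (hE t) (norm_nonneg _))
    calc ‖g t‖ ^ 2 ≤ (ε * ‖ψ t‖) ^ 2 := pow_le_pow_left₀ (norm_nonneg _) h1 2
      _ = ε ^ 2 * ‖ψ t‖ ^ 2 := by ring
  -- Cauchy–Schwarz in L²
  have hpow : ∀ x : ℝ, x ^ (2 : ℝ) = x ^ (2 : ℕ) := fun x => by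
    rw [← Real.rpow_natCast x 2]; norm_num
  have hfL2 : MemLp (fun t => ‖f t‖) (ENNReal.ofReal 2) volume :=
    hfc.norm.memLp_of_hasCompactSupport (hfs.comp_left norm_zero)
  have hgL2 : MemLp (fun t => ‖g t‖) (ENNReal.ofReal 2) volume :=
    hgc.norm.memLp_of_hasCompactSupport (hgs.comp_left norm_zero)
  have hCS : ∫ t, ‖f t‖ * ‖g t‖ ≤ Real.sqrt F * Real.sqrt G := by
    have hpq : Real.HolderConjugate 2 2 := Real.HolderConjugate.two_two
    have h := integral_mul_le_Lp_mul_Lq_of_nonneg hpq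
      (Filter.Eventually.of_forall fun t => norm_nonneg (f t))
      (Filter.Eventually.of_forall fun t => norm_nonneg (g t)) hfL2 hgL2
    rw [← Real.sqrt_eq_rpow, ← Real.sqrt_eq_rpow] at h
    simpa [hpow, hF_def, hG_def] using h
  have hinner : -(Real.sqrt F * Real.sqrt G) ≤ ∫ t, (inner ℝ (f t) (g t) : ℝ) := by
    calc -(Real.sqrt F * Real.sqrt G) ≤ -∫ t, ‖f t‖ * ‖g t‖ := neg_le_neg hCS
      _ = ∫ t, -(‖f t‖ * ‖g t‖) := (integral_neg _).symm
      _ ≤ ∫ t, (inner ℝ (f t) (g t) : ℝ) :=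
          integral_mono iprod.neg ifg fun t =>
            (abs_le.1 (abs_real_inner_le_norm (f t) (g t))).1
  -- Split the right-hand side
  have hRsplit : (∫ t : ℝ, ‖f t + g t‖ ^ 2) =
      F + 2 * (∫ t, (inner ℝ (f t) (g t) : ℝ)) + G := by
    have heq : (fun t => ‖f t + g t‖ ^ 2) = fun t =>
        ‖f t‖ ^ 2 + (2 * (inner ℝ (f t) (g t) : ℝ) + ‖g t‖ ^ 2) :=
      funext fun t => by simpa [add_assoc] using norm_add_sq_real (f t) (g t)
    have i1 : Integrable fun t => 2 * (inner ℝ (f t) (g t) : ℝ) + ‖g t‖ ^ 2 :=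
      (ifg.const_mul 2).add ig2
    rw [heq, integral_add if2 i1, integral_add (ifg.const_mul 2) ig2,
      integral_const_mul, ← hF_def, ← hG_def]
    ring
  -- Assemble
  have hsF : c * Real.sqrt A ≤ Real.sqrt F := by
    have : c * Real.sqrt A = Real.sqrt (c ^ 2 * A) := by
      rw [Real.sqrt_mul (by positivity), Real.sqrt_sq hc.le]
    rw [this]
    exact Real.sqrt_le_sqrt hF
  have hsG : Real.sqrt G ≤ ε * Real.sqrt A := by
    have : ε * Real.sqrt A = Real.sqrt (ε ^ 2 * A) := by
      rw [Real.sqrt_mul (by positivity), Real.sqrt_sq hε0]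
    rw [this]
    exact Real.sqrt_le_sqrt hG
  have key : ((c - ε) * Real.sqrt A) ^ 2 ≤ (Real.sqrt F - Real.sqrt G) ^ 2 := by
    refine pow_le_pow_left₀ (mul_nonneg (sub_nonneg.2 hεc) (Real.sqrt_nonneg _)) ?_ 2
    have := sub_le_sub hsF hsG
    linarith
  have e1 : ((c - ε) * Real.sqrt A) ^ 2 = (c - ε) ^ 2 * A := by
    rw [mul_pow, Real.sq_sqrt hA0]
  have e2 : (Real.sqrt F - Real.sqrt G) ^ 2 =
      F - 2 * (Real.sqrt F * Real.sqrt G) + G := by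
    rw [sub_sq, Real.sq_sqrt hF0, Real.sq_sqrt hG0]; ring
  rw [hRsplit]
  linarith
end
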